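/- arXiv:1802.03173 — 5 statements merged into one kernel-verified Lean document; each statement's English description precedes it below -/
import Mathlib

section
/- Let A be a divisible additive commutative group, let f be an additive group endomorphism of A, and let F₁, F₂ ∈ ℤ[X] be polynomials that are coprime in ℚ[X]. Suppose that (F₁·F₂)(f) = 0 as an endomorphism of A. Set A₁ = image of F₂(f) and A₂ = image of F₁(f). Then: (i) every element of A is a sum x₁ + x₂ with x₁ ∈ A₁ and x₂ ∈ A₂; and (ii) there exists an integer n > 0 such that n·x = 0 for every x ∈ A₁ ∩ A₂. -/
open Polynomial

lemma clear_denoms (F₁ F₂ : Polynomial ℤ)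
    (hcop : IsCoprime (F₁.map (Int.castRingHom ℚ)) (F₂.map (Int.castRingHom ℚ))) :
    ∃ (m : ℤ) (Q₁ Q₂ : Polynomial ℤ), 0 < m ∧ Q₁ * F₁ + Q₂ * F₂ = C m := by
  obtain ⟨G₁, G₂, h⟩ := hcop
  obtain ⟨b₁, hb₁⟩ := IsLocalization.integerNormalization_map_to_map
    (nonZeroDivisors ℤ) (S := ℚ) G₁
  obtain ⟨b₂, hb₂⟩ := IsLocalization.integerNormalization_map_to_map
    (nonZeroDivisors ℤ) (S := ℚ) G₂
  set P₁ := IsLocalization.integerNormalization (nonZeroDivisors ℤ) G₁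
  set P₂ := IsLocalization.integerNormalization (nonZeroDivisors ℤ) G₂
  have hb1ne : (b₁ : ℤ) ≠ 0 := nonZeroDivisors.coe_ne_zero b₁
  have hb2ne : (b₂ : ℤ) ≠ 0 := nonZeroDivisors.coe_ne_zero b₂
  have key : ((b₂ : ℤ) • P₁) * F₁ + ((b₁ : ℤ) • P₂) * F₂ = C ((b₁ : ℤ) * b₂) := by
    have hinj : Function.Injective (Polynomial.map (Int.castRingHom ℚ)) :=
      Polynomial.map_injective _ Int.cast_injective
    apply hinj
    rw [Polynomial.map_add, Polynomial.map_mul, Polynomial.map_mul]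
    have h1 : ((b₂ : ℤ) • P₁).map (Int.castRingHom ℚ) = (b₂ : ℤ) • ((b₁ : ℤ) • G₁) := by
      rw [Polynomial.map_smul, show (Int.castRingHom ℚ) = algebraMap ℤ ℚ from rfl, hb₁,
        algebraMap_smul]
    have h2 : ((b₁ : ℤ) • P₂).map (Int.castRingHom ℚ) = (b₁ : ℤ) • ((b₂ : ℤ) • G₂) := by
      rw [Polynomial.map_smul, show (Int.castRingHom ℚ) = algebraMap ℤ ℚ from rfl, hb₂,
        algebraMap_smul]
    rw [h1, h2, smul_mul_assoc, smul_mul_assoc, smul_mul_assoc, smul_mul_assoc,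
      smul_comm (b₁ : ℤ) (b₂ : ℤ), ← smul_add, ← smul_add, h]
    simp [zsmul_eq_mul]
    ring
  rcases lt_trichotomy ((b₁ : ℤ) * b₂) 0 with hneg | hz | hpos
  · exact ⟨-((b₁:ℤ)*b₂), -((b₂:ℤ) • P₁), -((b₁:ℤ) • P₂), by linarith, by
      rw [neg_mul, neg_mul, ← neg_add, key, map_neg]⟩
  · exact absurd hz (mul_ne_zero hb1ne hb2ne)
  · exact ⟨_, _, _, hpos, key⟩

/-- Splitting lemma for a divisible abelian group: if `F₁, F₂ ∈ ℤ[X]` are coprime in `ℚ[X]`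
and `(F₁ * F₂)(f) = 0`, then `A = im F₂(f) + im F₁(f)` and the intersection is killed by
some positive integer. -/
theorem stmt_2 (A : Type*) [AddCommGroup A]
    (hdiv : ∀ n : ℤ, 0 < n → ∀ a : A, ∃ b : A, n • b = a)
    (f : AddMonoid.End A) (F₁ F₂ : Polynomial ℤ)
    (hcop : IsCoprime (F₁.map (Int.castRingHom ℚ)) (F₂.map (Int.castRingHom ℚ)))
    (hker : Polynomial.aeval f (F₁ * F₂) = 0) :
    (∀ x : A, ∃ x₁ ∈ Set.range (Polynomial.aeval f F₂ : AddMonoid.End A),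
        ∃ x₂ ∈ Set.range (Polynomial.aeval f F₁ : AddMonoid.End A), x = x₁ + x₂) ∧
      (∃ n : ℤ, 0 < n ∧ ∀ x : A,
        x ∈ Set.range (Polynomial.aeval f F₂ : AddMonoid.End A) →
        x ∈ Set.range (Polynomial.aeval f F₁ : AddMonoid.End A) → n • x = 0) := by
  obtain ⟨m, Q₁, Q₂, hm, hQ⟩ := clear_denoms F₁ F₂ hcop
  have mulap : ∀ g h : AddMonoid.End A, ∀ b : A, (g * h) b = g (h b) := fun _ _ _ => rfl
  have comm : ∀ P Q : Polynomial ℤ, ∀ b : A,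
      Polynomial.aeval f P (Polynomial.aeval f Q b)
        = Polynomial.aeval f Q (Polynomial.aeval f P b) := by
    intro P Q b
    have h : (Polynomial.aeval f P * Polynomial.aeval f Q : AddMonoid.End A)
        = Polynomial.aeval f Q * Polynomial.aeval f P := by
      rw [← map_mul, ← map_mul, mul_comm]
    exact congrArg (fun E : AddMonoid.End A => E b) h
  have hCm : ∀ b : A, (Polynomial.aeval f (C m) : AddMonoid.End A) b = m • b := by
    intro b
    rw [aeval_C]
    rw [show (algebraMap ℤ (AddMonoid.End A)) m = (m : AddMonoid.End A) from map_intCast _ m]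
    exact AddMonoid.End.intCast_apply m b
  have key : ∀ b : A, Polynomial.aeval f Q₁ (Polynomial.aeval f F₁ b)
      + Polynomial.aeval f Q₂ (Polynomial.aeval f F₂ b) = m • b := by
    intro b
    have h := congrArg (fun P => (Polynomial.aeval f P : AddMonoid.End A) b) hQ
    simp only [map_add, map_mul, AddMonoidHom.add_apply] at h
    exact h.trans (hCm b)
  constructor
  · intro x
    obtain ⟨b, hb⟩ := hdiv m hm x
    refine ⟨Polynomial.aeval f F₂ (Polynomial.aeval f Q₂ b), ⟨_, rfl⟩,
      Polynomial.aeval f F₁ (Polynomial.aeval f Q₁ b), ⟨_, rfl⟩, ?_⟩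
    rw [← comm Q₂ F₂ b, ← comm Q₁ F₁ b, ← hb, add_comm]
    exact (key b).symm
  · refine ⟨m, hm, ?_⟩
    rintro x ⟨a, ha⟩ ⟨b, hb⟩
    have h1 : (Polynomial.aeval f F₁ : AddMonoid.End A) x = 0 := by
      rw [← ha, ← mulap, ← map_mul, hker]
      rfl
    have h2 : (Polynomial.aeval f F₂ : AddMonoid.End A) x = 0 := by
      rw [← hb, ← mulap, ← map_mul, mul_comm, hker]
      rfl
    have := key x
    rw [h1, h2, map_zero, map_zero, add_zero] at this
    exact this.symm
end

section
/- Let A be a divisible additive commutative group, let f be an additive group endomorphism of A, and let F₀, F₁, …, F_r ∈ ℤ[X] be polynomials that are pairwise coprime in ℚ[X]. Suppose that (F₀·F₁⋯F_r)(f) = 0 as an endomorphism of A. For each i, set A_i = image of (∏_{j≠i} F_j)(f). Then: (i) every element of A can be written as a sum a₀ + a₁ + ⋯ + a_r with a_i ∈ A_i for all i; and (ii) there exists an integer n > 0 such that whenever a_i ∈ A_i for all i and a₀ + a₁ + ⋯ + a_r = 0, one has n·a_i = 0 for every i. -/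
open Polynomial Finset Function

/-! Put `G i = ∏_{j ≠ i} F j`. Coprimality over `ℚ`, after clearing denominators, gives an
integral Bezout identity `∑ w i * G i = m` with `0 < m`, and `G i * G j` is a multiple of
`∏ F j` for `i ≠ j`, so the operators `G i (f)` annihilate each other. Hence
`m • b = ∑ G i (f) (w i (f) b)` decomposes every `m • b`, i.e. every element by divisibility.
If `∑ a j = 0` with `a j ∈ im G j (f)`, then `G j (f)` kills `a i` for `j ≠ i`, and also for
`j = i` because `a i = -∑_{j ≠ i} a j`; so the Bezout identity gives `m • a i = 0`. -/

attribute [local instance] Polynomial.algebra in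
theorem Polynomial.exists_C_mem_of_map_eq_top {R S : Type*} [CommSemiring R] [CommSemiring S]
    [Algebra R S] (M : Submonoid R) [IsLocalization M S] {I : Ideal R[X]}
    (hI : I.map (mapRingHom (algebraMap R S)) = ⊤) : ∃ c ∈ M, C c ∈ I := by
  have := Polynomial.isLocalization M S
  obtain ⟨_, ⟨c, hc, rfl⟩, hcI⟩ := (IsLocalization.algebraMap_mem_map_algebraMap_iff
    (M.map C) S[X] I 1).1 (by rw [map_one]; exact hI ▸ Submodule.mem_top)
  exact ⟨c, hc, by simpa only [mul_one] using hcI⟩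

theorem Ideal.span_range_prod_erase_eq_top {ι R : Type*} [Fintype ι] [Nonempty ι]
    [DecidableEq ι] [CommSemiring R] {s : ι → R} (hs : Pairwise (IsCoprime on s)) :
    Ideal.span (Set.range fun i => ∏ j ∈ univ.erase i, s j) = ⊤ := by
  obtain ⟨μ, hμ⟩ := exists_sum_eq_one_iff_pairwise_coprime'.2 hs
  simp only [compl_singleton] at hμ
  exact (Ideal.eq_top_iff_one _).2 (Ideal.mem_span_range_iff_exists_fun.2 ⟨μ, hμ⟩)

theorem Polynomial.exists_pos_C_mem_span_prod_erase {ι : Type*} [Fintype ι] [Nonempty ι]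
    [DecidableEq ι] {F : ι → ℤ[X]}
    (hF : Pairwise (IsCoprime on fun i => (F i).map (Int.castRingHom ℚ))) :
    ∃ m : ℤ, 0 < m ∧ C m ∈ Ideal.span (Set.range fun i => ∏ j ∈ univ.erase i, F j) := by
  obtain ⟨c, hc, hcI⟩ := exists_C_mem_of_map_eq_top (S := ℚ) (nonZeroDivisors ℤ)
    (I := Ideal.span (Set.range fun i => ∏ j ∈ univ.erase i, F j)) (by
    simpa [Ideal.map_span, ← Set.range_comp, comp_def, Polynomial.map_prod]
      using Ideal.span_range_prod_erase_eq_top hF)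
  refine ⟨|c|, abs_pos.2 (nonZeroDivisors.coe_ne_zero ⟨c, hc⟩), ?_⟩
  rcases abs_choice c with h | h <;> rw [h]
  · exact hcI
  · simpa using (Ideal.neg_mem_iff _).2 hcI

theorem Finset.prod_dvd_prod_erase_mul_prod_erase {ι α : Type*} [CommMonoid α] [DecidableEq ι]
    {s : Finset ι} (f : ι → α) {i j : ι} (hi : i ∈ s) (hij : i ≠ j) :
    ∏ k ∈ s, f k ∣ (∏ k ∈ s.erase i, f k) * ∏ k ∈ s.erase j, f k := by
  rw [← prod_erase_mul s f hi]
  exact mul_dvd_mul_left _ (dvd_prod_of_mem f (mem_erase.2 ⟨hij, hi⟩))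

theorem AddMonoid.End.finsetSum_apply {ι A : Type*} [AddCommMonoid A] (s : Finset ι)
    (F : ι → AddMonoid.End A) (a : A) : (∑ i ∈ s, F i) a = ∑ i ∈ s, F i a :=
  AddMonoidHom.finsetSum_apply F s a

section Splitting

variable {A S ι : Type*} [AddCommGroup A] [CommRing S] [Fintype ι] (φ : S →+* AddMonoid.End A)
  {g w : ι → S} {c : S}

theorem exists_mem_range_sum_eq_apply (hbez : ∑ i, w i * g i = c) (b : A) :
    ∃ a : ι → A, (∀ i, a i ∈ Set.range (φ (g i))) ∧ ∑ i, a i = φ c b := by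
  refine ⟨fun i => φ (g i) (φ (w i) b), fun i => ⟨_, rfl⟩, ?_⟩
  simp only [← hbez, mul_comm (w _), map_sum, map_mul, AddMonoid.End.finsetSum_apply,
    AddMonoid.End.coe_mul, comp_apply]

theorem apply_eq_zero_of_mem_range_of_sum_eq_zero [DecidableEq ι]
    (hbez : ∑ i, w i * g i = c) (hcross : ∀ i j, i ≠ j → φ (g i * g j) = 0) {a : ι → A}
    (ha : ∀ i, a i ∈ Set.range (φ (g i))) (hsum : ∑ i, a i = 0) (i : ι) : φ c (a i) = 0 := by
  have hkill : ∀ i j, i ≠ j → φ (g j) (a i) = 0 := by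
    intro i j hij
    obtain ⟨b, hb⟩ := ha i
    rw [← hb, ← comp_apply (f := φ (g j)), ← AddMonoid.End.coe_mul, ← map_mul,
      hcross j i hij.symm]
    rfl
  have hself : φ (g i) (a i) = 0 := by
    rw [eq_neg_of_add_eq_zero_left ((add_sum_erase _ a (mem_univ i)).trans hsum), map_neg,
      map_sum, sum_eq_zero fun j hj => hkill j i (ne_of_mem_erase hj), neg_zero]
  rw [← hbez, map_sum, AddMonoid.End.finsetSum_apply]
  refine sum_eq_zero fun j _ => ?_
  rw [map_mul, AddMonoid.End.coe_mul, comp_apply]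
  obtain rfl | hji := eq_or_ne j i
  · rw [hself, map_zero]
  · rw [hkill i j hji.symm, map_zero]

end Splitting

/-- Multi-factor splitting lemma: if `F₀, …, F_r ∈ ℤ[X]` are pairwise coprime in `ℚ[X]`
and `(∏ i, F i)(f) = 0` on a divisible abelian group `A`, then with
`A_i = im ((∏_{j ≠ i} F j)(f))`, every element of `A` is a sum `a₀ + ⋯ + a_r` with
`a_i ∈ A_i`, and relations among such sums are killed by a fixed positive integer. -/
theorem stmt_3 (A : Type*) [AddCommGroup A]
    (hdiv : ∀ n : ℤ, 0 < n → ∀ a : A, ∃ b : A, n • b = a)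
    (f : AddMonoid.End A) (r : ℕ) (F : Fin (r + 1) → Polynomial ℤ)
    (hcop : ∀ i j, i ≠ j →
      IsCoprime ((F i).map (Int.castRingHom ℚ)) ((F j).map (Int.castRingHom ℚ)))
    (hker : Polynomial.aeval f (∏ i, F i) = 0) :
    (∀ x : A, ∃ a : Fin (r + 1) → A,
        (∀ i, a i ∈ Set.range
          (Polynomial.aeval f (∏ j ∈ univ.erase i, F j) : AddMonoid.End A)) ∧
        ∑ i, a i = x) ∧
      (∃ n : ℤ, 0 < n ∧ ∀ a : Fin (r + 1) → A,
        (∀ i, a i ∈ Set.range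
          (Polynomial.aeval f (∏ j ∈ univ.erase i, F j) : AddMonoid.End A)) →
        ∑ i, a i = 0 → ∀ i, n • a i = 0) := by
  obtain ⟨m, hm, hmI⟩ := exists_pos_C_mem_span_prod_erase hcop
  obtain ⟨w, hw⟩ := Ideal.mem_span_range_iff_exists_fun.1 hmI
  let φ : ℤ[X] →+* AddMonoid.End A := (aeval f).toRingHom
  have hφm (b : A) : φ (C m) b = m • b := by
    simp [φ]
  have hcross (i j : Fin (r + 1)) (hij : i ≠ j) :
      φ ((∏ k ∈ univ.erase i, F k) * ∏ k ∈ univ.erase j, F k) = 0 := by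
    obtain ⟨q, hq⟩ := prod_dvd_prod_erase_mul_prod_erase F (mem_univ i) hij
    rw [hq, map_mul]
    exact mul_eq_zero_of_left hker _
  refine ⟨fun x => ?_, m, hm, fun a ha hsum i => ?_⟩
  · obtain ⟨b, rfl⟩ := hdiv m hm x
    rw [← hφm]
    exact exists_mem_range_sum_eq_apply φ hw b
  · rw [← hφm]
    exact apply_eq_zero_of_mem_range_of_sum_eq_zero φ hw hcross ha hsum i
end

section
/- Let A be a divisible additive commutative group, let f be an additive group endomorphism of A, and let F ∈ ℤ[X] be a polynomial with F(f) = 0 as an endomorphism of A and F(1) ≠ 0. Then the map f − id : A → A, x ↦ f(x) − x, is surjective. -/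
open Polynomial

/-- If `F(f) = 0` for a polynomial `F ∈ ℤ[X]` with `F(1) ≠ 0`, on a divisible abelian
group `A`, then `f - id : A → A` is surjective. -/
theorem stmt_4 (A : Type*) [AddCommGroup A]
    (hdiv : ∀ n : ℤ, 0 < n → ∀ a : A, ∃ b : A, n • b = a)
    (f : AddMonoid.End A) (F : Polynomial ℤ)
    (hker : Polynomial.aeval f F = 0) (hF1 : F.eval 1 ≠ 0) :
    Function.Surjective (fun x : A => f x - x) := by
  set n : ℤ := F.eval 1 with hn
  obtain ⟨Q, hQ⟩ : (X - C (1:ℤ)) ∣ F - C n := X_sub_C_dvd_sub_C_eval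
  have hFdec : F = (X - C (1:ℤ)) * Q + C n := by linear_combination hQ
  have hkey : (f - 1) * Polynomial.aeval f Q = - (n • (1 : AddMonoid.End A)) := by
    have h := hker
    rw [hFdec] at h
    simp only [map_add, map_mul, map_sub, aeval_X, aeval_C, algebraMap_int_eq,
      eq_intCast, map_one, map_intCast] at h
    have h2 : ((n : ℤ) : AddMonoid.End A) = n • 1 := by simp [zsmul_eq_mul]
    rw [h2] at h
    exact eq_neg_of_add_eq_zero_left h
  intro a
  -- get b with n • b = -a
  obtain ⟨b, hb⟩ : ∃ b : A, n • b = -a := by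
    rcases lt_or_gt_of_ne hF1 with hneg | hpos
    · obtain ⟨b, hb⟩ := hdiv (-n) (by omega) a
      exact ⟨b, by rw [← neg_neg (n • b), ← neg_smul, hb]⟩
    · exact hdiv n hpos (-a)
  refine ⟨Polynomial.aeval f Q b, ?_⟩
  have := congrArg (fun g : AddMonoid.End A => g b) hkey
  simp only [AddMonoid.End.coe_mul] at this
  calc f (Polynomial.aeval f Q b) - Polynomial.aeval f Q b
      = ((f - 1) * Polynomial.aeval f Q) b := rfl
    _ = (-(n • (1 : AddMonoid.End A))) b := by rw [hkey]
    _ = -(n • b) := rfl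
    _ = a := by rw [hb, neg_neg]
end

section
/- Let A be a divisible additive commutative group, let f be an additive group endomorphism of A, and let F ∈ ℤ[X] be a polynomial with F(f) = 0 as an endomorphism of A and F(1) ≠ 0. Then for every a ∈ A there exists b ∈ A such that for all x ∈ A one has b + (a + f(x − b)) = f(x); that is, the conjugate T_b ∘ (T_a ∘ f) ∘ T_{−b} of the map x ↦ a + f(x) by the translation T_b equals the homomorphism f. -/
/-!
Dividing `F` by `X - 1` gives `F = F(1) + (X - 1) G`, so `F(f) = 0` yields
`(f - 1) ∘ G(f) = -F(1)`. On a divisible group multiplication by `F(1) ≠ 0` is surjective,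
hence so is `f - 1`, and any `b` with `f b - b = a` conjugates `x ↦ a + f x` into `f`.
-/

open Polynomial

theorem Polynomial.exists_aeval_eq_add_sub_mul {R S : Type*} [CommRing R] [Ring S] [Algebra R S]
    (F : R[X]) (r : R) (s : S) :
    ∃ G : R[X], aeval s F = algebraMap R S (F.eval r) + (s - algebraMap R S r) * aeval s G := by
  obtain ⟨G, hG⟩ := X_sub_C_dvd_sub_C_eval (a := r) (p := F)
  refine ⟨G, ?_⟩
  have := congrArg (aeval s) hG
  rw [map_sub, aeval_C, map_mul, map_sub, aeval_X, aeval_C] at this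
  rw [← this, add_sub_cancel]

theorem exists_zsmul_eq_of_ne_zero {A : Type*} [AddCommGroup A]
    (hdiv : ∀ n : ℤ, 0 < n → ∀ a : A, ∃ b : A, n • b = a) {n : ℤ} (hn : n ≠ 0) (a : A) :
    ∃ c : A, n • c = a := by
  rcases hn.lt_or_gt with hneg | hpos
  · obtain ⟨c, hc⟩ := hdiv (-n) (neg_pos.mpr hneg) a
    exact ⟨-c, by rwa [smul_neg, ← neg_smul]⟩
  · exact hdiv n hpos a

theorem AddMonoid.End.exists_sub_self_eq_zsmul_of_aeval_eq_zero {A : Type*} [AddCommGroup A]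
    {f : AddMonoid.End A} {F : ℤ[X]} (hker : aeval f F = 0) (c : A) :
    ∃ b : A, f b - b = F.eval 1 • c := by
  obtain ⟨G, hG⟩ := F.exists_aeval_eq_add_sub_mul 1 f
  refine ⟨aeval f G (-c), ?_⟩
  have hfactor : (f - 1) * aeval f G = -(F.eval 1 • 1) := by
    rw [hker, map_one, Algebra.algebraMap_eq_smul_one, eq_comm, add_eq_zero_iff_neg_eq] at hG
    exact hG.symm
  calc f (aeval f G (-c)) - aeval f G (-c) = ((f - 1) * aeval f G) (-c) := rfl
    _ = -(F.eval 1 • -c) := by rw [hfactor]; rfl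
    _ = F.eval 1 • c := by rw [smul_neg, neg_neg]

/-- If `F(f) = 0` with `F ∈ ℤ[X]`, `F(1) ≠ 0`, on a divisible abelian group, then for every
`a` there exists `b` such that `T_b ∘ (T_a ∘ f) ∘ T_{-b} = f`. -/
theorem stmt_6 (A : Type*) [AddCommGroup A]
    (hdiv : ∀ n : ℤ, 0 < n → ∀ a : A, ∃ b : A, n • b = a)
    (f : AddMonoid.End A) (F : Polynomial ℤ)
    (hker : Polynomial.aeval f F = 0) (hF1 : F.eval 1 ≠ 0) :
    ∀ a : A, ∃ b : A, ∀ x : A, b + (a + f (x - b)) = f x := by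
  intro a
  obtain ⟨c, hc⟩ := exists_zsmul_eq_of_ne_zero hdiv hF1 a
  obtain ⟨b, hb⟩ := AddMonoid.End.exists_sub_self_eq_zsmul_of_aeval_eq_zero hker c
  refine ⟨b, fun x => ?_⟩
  rw [← hc, ← hb, map_sub]
  abel
end

section
/- Let V be a finite-dimensional complex vector space and let f : V → V be a ℂ-linear endomorphism with characteristic polynomial Q ∈ ℂ[X]. Regard V as a finite-dimensional real vector space by restriction of scalars and f as an ℝ-linear endomorphism; let P ∈ ℝ[X] be its characteristic polynomial. Then the image of P under the coefficientwise inclusion ℝ[X] → ℂ[X] equals Q · Q̄, where Q̄ ∈ ℂ[X] is obtained from Q by applying complex conjugation to each coefficient. -/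
/-!
For real `t`, evaluating the real characteristic polynomial `P` at `t` gives
`det_ℝ (t - f) = N_{ℂ/ℝ} (det_ℂ (t - f)) = |Q(t)|² = Q(t) · Q̄(t)`.
Hence the complex polynomials `P` and `Q · Q̄` agree on the infinitely many real points,
so they are equal.
-/

open Polynomial

theorem LinearMap.eval_charpoly_restrictScalars {R S A : Type*} [CommRing R] [CommRing S]
    [Algebra R S] [Module.Free R S] [AddCommGroup A] [Module R A] [Module S A]
    [IsScalarTower R S A] [Module.Free R A] [Module.Finite R A] [Module.Free S A]
    [Module.Finite S A] (f : A →ₗ[S] A) (t : R) :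
    (f.restrictScalars R).charpoly.eval t =
      Algebra.norm R (f.charpoly.eval (algebraMap R S t)) := by
  rw [eval_charpoly, eval_charpoly, ← det_restrictScalars]
  congr 1
  ext x
  simp [algebraMap_smul]

theorem Polynomial.eval_mul_map_conj_ofReal (p : ℂ[X]) (t : ℝ) :
    (p * p.map (starRingEnd ℂ)).eval (t : ℂ) = Complex.normSq (p.eval (t : ℂ)) := by
  rw [eval_mul, ← Complex.conj_ofReal, eval_map_apply, Complex.conj_ofReal, Complex.mul_conj]

/-- The characteristic polynomial of a `ℂ`-linear endomorphism `f`, viewed as an `ℝ`-linear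
endomorphism by restriction of scalars, equals `Q * Q̄` where `Q` is the characteristic
polynomial of `f` and `Q̄` is obtained by conjugating the coefficients. -/
theorem stmt_7 (V : Type*) [AddCommGroup V] [Module ℂ V] [FiniteDimensional ℂ V]
    (f : V →ₗ[ℂ] V) :
    ((f.restrictScalars ℝ).charpoly).map (algebraMap ℝ ℂ) =
      f.charpoly * (f.charpoly).map (starRingEnd ℂ) := by
  refine eq_of_infinite_eval_eq _ _ <|
    (Set.infinite_range_of_injective Complex.ofReal_injective).mono ?_
  rintro _ ⟨t, rfl⟩
  rw [Set.mem_ofPred_eq, eval_mul_map_conj_ofReal, ← Complex.coe_algebraMap, eval_map_apply,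
    f.eval_charpoly_restrictScalars, Algebra.norm_complex_apply]
end
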